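/- arXiv:2511.15371 — 4 statements merged into one kernel-verified Lean document; each statement's English description precedes it below -/
import Mathlib

section
/- Jaccard triangle inequality for indicator functions: for measurable sets A, B, C of finite positive Lebesgue measure, (1 − μ(A∩C)/μ(A∪C)) ≤ (1 − μ(A∩B)/μ(A∪B)) + (1 − μ(B∩C)/μ(B∪C)). -/
open MeasureTheory Set
open scoped symmDiff ENNReal

/-!
Write the Jaccard distance as `μ(s ∆ t) / μ(s ∪ t)`. Passing from `s ∆ u` to `s ∆ t` and `t ∆ u`
pays for `s ∆ u ⊆ s ∆ t ∪ t ∆ u` and, twice, for every point of `t \ (s ∪ u)`. Adding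
`x = μ(t \ (s ∪ u))` to numerator and denominator of `μ(s ∆ u) / μ(s ∪ u)` can only increase this
ratio, and `μ(s ∪ u) + x ≥ μ(s ∪ t ∪ u)`, so `d(s, u) ≤ (μ(s ∆ t) + μ(t ∆ u)) / μ(s ∪ t ∪ u)`.
Shrinking the common denominator to `μ(s ∪ t)`, resp. `μ(t ∪ u)`, gives the triangle inequality.
-/

theorem div_le_add_div_add {K : Type*} [Field K] [LinearOrder K] [IsStrictOrderedRing K]
    {a b c : K} (hab : a ≤ b) (hb : 0 < b) (hc : 0 ≤ c) : a / b ≤ (a + c) / (b + c) := by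
  rw [div_le_div_iff₀ hb (by positivity)]
  nlinarith

namespace MeasureTheory

variable {α : Type*} [MeasurableSpace α] {μ : Measure α} {s t u v : Set α}

/-- With the convention `x / 0 = 0`, this is `0` when `s ∪ t` is null. -/
noncomputable def jaccardDist (μ : Measure α) (s t : Set α) : ℝ :=
  μ.real (s ∆ t) / μ.real (s ∪ t)

theorem jaccardDist_nonneg : 0 ≤ jaccardDist μ s t :=
  div_nonneg measureReal_nonneg measureReal_nonneg

theorem measureReal_union_eq_symmDiff_add_inter (hs : MeasurableSet s) (ht : MeasurableSet t)
    (hs' : μ s ≠ ∞) (ht' : μ t ≠ ∞) :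
    μ.real (s ∪ t) = μ.real (s ∆ t) + μ.real (s ∩ t) := by
  have hd : Disjoint (s ∆ t) (s ∩ t) := disjoint_symmDiff_inf s t
  rw [← measureReal_union hd (hs.inter ht)]
  exact congrArg μ.real (symmDiff_sup_inf s t).symm

theorem one_sub_measureReal_inter_div_union (hs : MeasurableSet s) (ht : MeasurableSet t)
    (hs' : μ s ≠ ∞) (ht' : μ t ≠ ∞) (h : μ (s ∪ t) ≠ 0) :
    1 - μ.real (s ∩ t) / μ.real (s ∪ t) = jaccardDist μ s t := by
  have hne : μ.real (s ∪ t) ≠ 0 := ENNReal.toReal_ne_zero.2 ⟨h, by finiteness⟩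
  rw [jaccardDist, one_sub_div hne, measureReal_union_eq_symmDiff_add_inter hs ht hs' ht',
    add_sub_cancel_right]

theorem measureReal_symmDiff_add_sdiff_union_le (ht : MeasurableSet t) (hu : MeasurableSet u)
    (hs' : μ s ≠ ∞) (ht' : μ t ≠ ∞) (hu' : μ u ≠ ∞) :
    μ.real (s ∆ u) + μ.real (t \ (s ∪ u)) ≤ μ.real (s ∆ t) + μ.real (t ∆ u) := by
  have hst : μ (s ∆ t) ≠ ∞ := measure_symmDiff_ne_top hs' ht'
  have htu : μ (t ∆ u) ≠ ∞ := measure_symmDiff_ne_top ht' hu'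
  calc μ.real (s ∆ u) + μ.real (t \ (s ∪ u))
      ≤ μ.real (s ∆ t ∪ t ∆ u) + μ.real (s ∆ t ∩ t ∆ u) :=
        add_le_add (measureReal_mono (symmDiff_triangle s t u))
          (measureReal_mono fun x hx ↦ by grind)
    _ = μ.real (s ∆ t) + μ.real (t ∆ u) := measureReal_union_add_inter (ht.symmDiff hu)

theorem measureReal_symmDiff_div_le_jaccardDist (h : s ∪ t ⊆ v) (hv : μ v ≠ ∞) :
    μ.real (s ∆ t) / μ.real v ≤ jaccardDist μ s t := by
  have hst : μ (s ∪ t) ≠ ∞ := measure_ne_top_of_subset h hv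
  rcases measureReal_nonneg.eq_or_lt with h0 | hpos
  · rw [jaccardDist, measureReal_mono_null symmDiff_subset_union h0.symm hst, zero_div, zero_div]
  · exact div_le_div_of_nonneg_left measureReal_nonneg hpos (measureReal_mono h hv)

theorem jaccardDist_triangle (ht : MeasurableSet t) (hu : MeasurableSet u)
    (hs' : μ s ≠ ∞) (ht' : μ t ≠ ∞) (hu' : μ u ≠ ∞) :
    jaccardDist μ s u ≤ jaccardDist μ s t + jaccardDist μ t u := by
  have hU : μ (s ∪ t ∪ u) ≠ ∞ := by finiteness
  rcases (measureReal_nonneg (μ := μ) (s := s ∪ u)).eq_or_lt with h0 | hpos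
  · rw [jaccardDist, ← h0, div_zero]
    exact add_nonneg jaccardDist_nonneg jaccardDist_nonneg
  set x := μ.real (t \ (s ∪ u))
  have hcover : μ.real (s ∪ t ∪ u) ≤ μ.real (s ∪ u) + x :=
    calc μ.real (s ∪ t ∪ u) = μ.real (s ∪ u ∪ t \ (s ∪ u)) := by
          rw [union_sdiff_self, union_right_comm]
      _ ≤ μ.real (s ∪ u) + x := measureReal_union_le _ _
  calc jaccardDist μ s u
      ≤ (μ.real (s ∆ u) + x) / (μ.real (s ∪ u) + x) :=
        div_le_add_div_add (measureReal_mono symmDiff_subset_union) hpos measureReal_nonneg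
    _ ≤ (μ.real (s ∆ t) + μ.real (t ∆ u)) / μ.real (s ∪ t ∪ u) :=
        div_le_div₀ (by positivity) (measureReal_symmDiff_add_sdiff_union_le ht hu hs' ht' hu')
          (hpos.trans_le (measureReal_mono (union_subset_union_left u subset_union_left) hU))
          hcover
    _ = μ.real (s ∆ t) / μ.real (s ∪ t ∪ u) + μ.real (t ∆ u) / μ.real (s ∪ t ∪ u) :=
        add_div _ _ _
    _ ≤ jaccardDist μ s t + jaccardDist μ t u :=
        add_le_add (measureReal_symmDiff_div_le_jaccardDist subset_union_left hU)
          (measureReal_symmDiff_div_le_jaccardDist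
            (union_subset_union_left u subset_union_right) hU)

end MeasureTheory

theorem jaccard_triangle_general
    (A B C : Set ℝ)
    (hA : MeasurableSet A) (hB : MeasurableSet B) (hC : MeasurableSet C)
    (hA0 : 0 < volume A) (hC0 : 0 < volume C)
    (hAfin : volume A < ⊤) (hBfin : volume B < ⊤) (hCfin : volume C < ⊤) :
    1 - (volume (A ∩ C)).toReal / (volume (A ∪ C)).toReal ≤
      (1 - (volume (A ∩ B)).toReal / (volume (A ∪ B)).toReal) +
      (1 - (volume (B ∩ C)).toReal / (volume (B ∪ C)).toReal) := by
  simp only [← measureReal_def]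
  rw [one_sub_measureReal_inter_div_union hA hC hAfin.ne hCfin.ne
      (measure_pos_of_superset subset_union_left hA0.ne').ne',
    one_sub_measureReal_inter_div_union hA hB hAfin.ne hBfin.ne
      (measure_pos_of_superset subset_union_left hA0.ne').ne',
    one_sub_measureReal_inter_div_union hB hC hBfin.ne hCfin.ne
      (measure_pos_of_superset subset_union_right hC0.ne').ne']
  exact jaccardDist_triangle hB hC hAfin.ne hBfin.ne hCfin.ne

theorem jaccard_triangle
    (A B C : Set ℝ)
    (hA : MeasurableSet A) (hB : MeasurableSet B) (hC : MeasurableSet C)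
    (hA0 : 0 < volume A) (hB0 : 0 < volume B) (hC0 : 0 < volume C)
    (hAfin : volume A < ⊤) (hBfin : volume B < ⊤) (hCfin : volume C < ⊤) :
    1 - (volume (A ∩ C)).toReal / (volume (A ∪ C)).toReal ≤
      (1 - (volume (A ∩ B)).toReal / (volume (A ∪ B)).toReal) +
      (1 - (volume (B ∩ C)).toReal / (volume (B ∪ C)).toReal) :=
  jaccard_triangle_general A B C hA hB hC hA0 hC0 hAfin hBfin hCfin
end

section
/- Scaled indicator triangle inequality: for measurable sets A, B, C of finite positive measure and reals α, β, γ ≥ 0 with α ≤ β ≤ γ and γ > 0, β > 0, one has (β μ(B∩C))/(γ μ(B∪C)) + (α μ(A∩B))/(β μ(A∪B)) − (α μ(A∩C))/(γ μ(A∪C)) ≤ 1. -/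
open MeasureTheory

private lemma scaled_jaccard_aux (p q x y z : ℝ) (hp0 : 0 ≤ p) (hp1 : p ≤ 1)
    (hq0 : 0 ≤ q) (hq1 : q ≤ 1) (hx0 : 0 ≤ x) (hx1 : x ≤ 1)
    (hy0 : 0 ≤ y) (hy1 : y ≤ 1) (hz0 : 0 ≤ z) (h : x + y - z ≤ 1) :
    p * x + q * y - p * (q * z) ≤ 1 := by
  nlinarith [mul_nonneg (mul_nonneg hp0 hq0) (by linarith : (0:ℝ) ≤ z - (x + y - 1)),
    mul_nonneg (mul_nonneg hq0 (by linarith : (0:ℝ) ≤ 1 - p)) (by linarith : (0:ℝ) ≤ 1 - y),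
    mul_nonneg (by linarith : (0:ℝ) ≤ 1 - p) (by linarith : (0:ℝ) ≤ 1 - q),
    mul_nonneg (mul_nonneg hp0 (by linarith : (0:ℝ) ≤ 1 - q)) (by linarith : (0:ℝ) ≤ 1 - x)]

theorem scaled_jaccard_key_inequality
    (A B C : Set ℝ)
    (hA : MeasurableSet A) (hB : MeasurableSet B) (hC : MeasurableSet C)
    (hA0 : 0 < volume A) (hB0 : 0 < volume B) (hC0 : 0 < volume C)
    (hAfin : volume A < ⊤) (hBfin : volume B < ⊤) (hCfin : volume C < ⊤)
    (α β γ : ℝ) (hα : 0 ≤ α) (hαβ : α ≤ β) (hβγ : β ≤ γ)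
    (hβ : 0 < β) (hγ : 0 < γ) :
    (β * (volume (B ∩ C)).toReal) / (γ * (volume (B ∪ C)).toReal) +
      (α * (volume (A ∩ B)).toReal) / (β * (volume (A ∪ B)).toReal) -
      (α * (volume (A ∩ C)).toReal) / (γ * (volume (A ∪ C)).toReal) ≤ 1 := by
  -- finiteness of unions
  have hUab : volume (A ∪ B) < ⊤ := measure_union_lt_top hAfin hBfin
  have hUac : volume (A ∪ C) < ⊤ := measure_union_lt_top hAfin hCfin
  have hUbc : volume (B ∪ C) < ⊤ := measure_union_lt_top hBfin hCfin
  have hT : volume (A ∪ B ∪ C) < ⊤ := measure_union_lt_top hUab hCfin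
  -- real abbreviations
  set iab := (volume (A ∩ B)).toReal with hiab
  set iac := (volume (A ∩ C)).toReal with hiac
  set ibc := (volume (B ∩ C)).toReal with hibc
  set uab := (volume (A ∪ B)).toReal with huab
  set uac := (volume (A ∪ C)).toReal with huac
  set ubc := (volume (B ∪ C)).toReal with hubc
  set t := (volume (A ∪ B ∪ C)).toReal with ht
  -- basic bounds
  have hiab0 : 0 ≤ iab := ENNReal.toReal_nonneg
  have hiac0 : 0 ≤ iac := ENNReal.toReal_nonneg
  have hibc0 : 0 ≤ ibc := ENNReal.toReal_nonneg
  have hiab_le : iab ≤ uab :=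
    ENNReal.toReal_mono hUab.ne (measure_mono (by intro x hx; exact Or.inl hx.1))
  have hiac_le : iac ≤ uac :=
    ENNReal.toReal_mono hUac.ne (measure_mono (by intro x hx; exact Or.inl hx.1))
  have hibc_le : ibc ≤ ubc :=
    ENNReal.toReal_mono hUbc.ne (measure_mono (by intro x hx; exact Or.inl hx.1))
  have huab0 : 0 < uab :=
    ENNReal.toReal_pos (lt_of_lt_of_le hA0 (measure_mono Set.subset_union_left)).ne' hUab.ne
  have huac0 : 0 < uac :=
    ENNReal.toReal_pos (lt_of_lt_of_le hA0 (measure_mono Set.subset_union_left)).ne' hUac.ne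
  have hubc0 : 0 < ubc :=
    ENNReal.toReal_pos (lt_of_lt_of_le hB0 (measure_mono Set.subset_union_left)).ne' hUbc.ne
  have huab_t : uab ≤ t :=
    ENNReal.toReal_mono hT.ne (measure_mono Set.subset_union_left)
  have hubc_t : ubc ≤ t :=
    ENNReal.toReal_mono hT.ne
      (measure_mono (by intro x hx; rcases hx with h | h; exact Or.inl (Or.inr h); exact Or.inr h))
  have huac_t : uac ≤ t :=
    ENNReal.toReal_mono hT.ne
      (measure_mono (by intro x hx; rcases hx with h | h; exact Or.inl (Or.inl h); exact Or.inr h))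
  have ht0 : 0 < t := lt_of_lt_of_le huab0 huab_t
  -- symmetric-difference style sets
  have hDab : (volume ((A ∪ B) \ (A ∩ B))).toReal = uab - iab := by
    rw [measure_diff (by intro x hx; exact Or.inl hx.1) (hA.inter hB).nullMeasurableSet
        (ne_top_of_le_ne_top hUab.ne (measure_mono (by intro x hx; exact Or.inl hx.1)))]
    exact ENNReal.toReal_sub_of_le (measure_mono (by intro x hx; exact Or.inl hx.1)) hUab.ne
  have hDac : (volume ((A ∪ C) \ (A ∩ C))).toReal = uac - iac := by
    rw [measure_diff (by intro x hx; exact Or.inl hx.1) (hA.inter hC).nullMeasurableSet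
        (ne_top_of_le_ne_top hUac.ne (measure_mono (by intro x hx; exact Or.inl hx.1)))]
    exact ENNReal.toReal_sub_of_le (measure_mono (by intro x hx; exact Or.inl hx.1)) hUac.ne
  have hDbc : (volume ((B ∪ C) \ (B ∩ C))).toReal = ubc - ibc := by
    rw [measure_diff (by intro x hx; exact Or.inl hx.1) (hB.inter hC).nullMeasurableSet
        (ne_top_of_le_ne_top hUbc.ne (measure_mono (by intro x hx; exact Or.inl hx.1)))]
    exact ENNReal.toReal_sub_of_le (measure_mono (by intro x hx; exact Or.inl hx.1)) hUbc.ne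
  -- W = B \ (A ∪ C) = (A ∪ B ∪ C) \ (A ∪ C)
  have hWeq : B \ (A ∪ C) = (A ∪ B ∪ C) \ (A ∪ C) := by
    ext x; simp only [Set.mem_diff, Set.mem_union]; tauto
  have hsubAC : A ∪ C ⊆ A ∪ B ∪ C := by
    intro x hx; simp only [Set.mem_union] at hx ⊢; tauto
  have hW : (volume (B \ (A ∪ C))).toReal = t - uac := by
    rw [hWeq, measure_diff hsubAC (hA.union hC).nullMeasurableSet hUac.ne]
    exact ENNReal.toReal_sub_of_le (measure_mono hsubAC) hT.ne
  -- key measure inequality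
  have hkey : (uac - iac) + (t - uac) ≤ (uab - iab) + (ubc - ibc) := by
    have hdisj : Disjoint ((A ∪ C) \ (A ∩ C)) (B \ (A ∪ C)) := by
      rw [Set.disjoint_left]; intro x hx hx'
      exact hx'.2 hx.1
    have hsub : ((A ∪ C) \ (A ∩ C)) ∪ (B \ (A ∪ C)) ⊆
        ((A ∪ B) \ (A ∩ B)) ∪ ((B ∪ C) \ (B ∩ C)) := by
      intro x hx
      simp only [Set.mem_union, Set.mem_diff, Set.mem_inter_iff, Set.mem_union] at hx ⊢
      tauto
    have h1 : volume ((A ∪ C) \ (A ∩ C)) + volume (B \ (A ∪ C)) ≤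
        volume ((A ∪ B) \ (A ∩ B)) + volume ((B ∪ C) \ (B ∩ C)) := by
      rw [← measure_union hdisj (hB.diff (hA.union hC))]
      exact le_trans (measure_mono hsub) (measure_union_le _ _)
    have h2 := ENNReal.toReal_mono
      (by
        refine ENNReal.add_ne_top.2 ⟨?_, ?_⟩
        · exact ne_top_of_le_ne_top hUab.ne (measure_mono Set.diff_subset)
        · exact ne_top_of_le_ne_top hUbc.ne (measure_mono Set.diff_subset)) h1
    rw [ENNReal.toReal_add (ne_top_of_le_ne_top hUac.ne (measure_mono Set.diff_subset))
        (ne_top_of_le_ne_top hBfin.ne (measure_mono Set.diff_subset)),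
      ENNReal.toReal_add (ne_top_of_le_ne_top hUab.ne (measure_mono Set.diff_subset))
        (ne_top_of_le_ne_top hUbc.ne (measure_mono Set.diff_subset)),
      hDab, hDac, hDbc, hW] at h2
    linarith
  -- unscaled Jaccard triangle inequality
  have hstep1 : (uac - iac) / uac ≤ (t - iac) / t := by
    rw [div_le_div_iff₀ huac0 ht0]
    nlinarith [mul_le_mul_of_nonneg_left huac_t hiac0]
  have hstep2 : (t - iac) / t ≤ ((uab - iab) + (ubc - ibc)) / t := by
    apply div_le_div_of_nonneg_right ?_ ?_ <;> linarith
  have hstep3 : ((uab - iab) + (ubc - ibc)) / t ≤ (uab - iab) / uab + (ubc - ibc) / ubc := by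
    rw [add_div]
    have l1 : (uab - iab) / t ≤ (uab - iab) / uab := by
      rw [div_le_div_iff₀ ht0 huab0]
      exact mul_le_mul_of_nonneg_left huab_t (by linarith)
    have l2 : (ubc - ibc) / t ≤ (ubc - ibc) / ubc := by
      rw [div_le_div_iff₀ ht0 hubc0]
      exact mul_le_mul_of_nonneg_left hubc_t (by linarith)
    linarith
  have htri : (uac - iac) / uac ≤ (uab - iab) / uab + (ubc - ibc) / ubc :=
    le_trans hstep1 (le_trans hstep2 hstep3)
  have e1 : (uab - iab) / uab = 1 - iab / uab := by
    field_simp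
  have e2 : (uac - iac) / uac = 1 - iac / uac := by
    field_simp
  have e3 : (ubc - ibc) / ubc = 1 - ibc / ubc := by
    field_simp
  rw [e1, e2, e3] at htri
  -- ratios in [0,1]
  set x := ibc / ubc with hx
  set y := iab / uab with hy
  set z := iac / uac with hz
  have hx0 : 0 ≤ x := div_nonneg hibc0 hubc0.le
  have hx1 : x ≤ 1 := (div_le_one hubc0).2 hibc_le
  have hy0 : 0 ≤ y := div_nonneg hiab0 huab0.le
  have hy1 : y ≤ 1 := (div_le_one huab0).2 hiab_le
  have hz0 : 0 ≤ z := div_nonneg hiac0 huac0.le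
  have hxyz : x + y - z ≤ 1 := by linarith
  -- scaling coefficients
  have hpq : (β / γ) * (α / β) = α / γ := by
    field_simp
  have hp0 : 0 ≤ β / γ := div_nonneg hβ.le hγ.le
  have hp1 : β / γ ≤ 1 := (div_le_one hγ).2 hβγ
  have hq0 : 0 ≤ α / β := div_nonneg hα hβ.le
  have hq1 : α / β ≤ 1 := (div_le_one hβ).2 hαβ
  have g1 : β * ibc / (γ * ubc) = (β / γ) * x := by
    rw [hx, mul_div_mul_comm]
  have g2 : α * iab / (β * uab) = (α / β) * y := by
    rw [hy, mul_div_mul_comm]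
  have g3 : α * iac / (γ * uac) = (β / γ) * ((α / β) * z) := by
    rw [hz, ← mul_assoc, hpq, mul_div_mul_comm]
  rw [g1, g2, g3]
  exact scaled_jaccard_aux _ _ _ _ _ hp0 hp1 hq0 hq1 hx0 hx1 hy0 hy1 hz0 hxyz
end

section
/- Triangle inequality for d_1: for nonnegative integrable functions p, q, r on ℝ (each with support of positive measure and pairwise maxima having positive integrals), d_1(p,r) ≤ d_1(p,q) + d_1(q,r), where d_1(f,g) = 1 − (∫ min(f,g))/(∫ max(f,g)). -/
open MeasureTheory Function

private lemma steinhaus_key (a b c x y z : ℝ)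
    (ha : 0 ≤ a) (hc : 0 ≤ c) (hx : 0 ≤ x) (hy : 0 ≤ y) (hz : 0 ≤ z)
    (hzxy : z ≤ x + y) (hba : b ≤ a + x) (hbc : b ≤ c + y)
    (h1 : 0 < a + c + z) (h2 : 0 < a + b + x) (h3 : 0 < b + c + y) :
    2 * z / (a + c + z) ≤ 2 * x / (a + b + x) + 2 * y / (b + c + y) := by
  have h4 : 0 < a + c + x + y := by linarith
  have step1 : 2 * z / (a + c + z) ≤ 2 * (x + y) / (a + c + x + y) := by
    rw [div_le_div_iff₀ h1 h4]
    nlinarith [mul_nonneg (add_nonneg ha hc) (by linarith : (0:ℝ) ≤ x + y - z)]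
  have step2 : 2 * x / (a + c + x + y) ≤ 2 * x / (a + b + x) := by
    rcases eq_or_lt_of_le hx with h | h
    · simp [← h]
    · exact div_le_div_of_nonneg_left (by linarith) h2 (by linarith)
  have step3 : 2 * y / (a + c + x + y) ≤ 2 * y / (b + c + y) := by
    rcases eq_or_lt_of_le hy with h | h
    · simp [← h]
    · exact div_le_div_of_nonneg_left (by linarith) h3 (by linarith)
  have : 2 * (x + y) / (a + c + x + y)
      = 2 * x / (a + c + x + y) + 2 * y / (a + c + x + y) := by ring
  linarith

theorem d1_triangle
    (p q r : ℝ → ℝ)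
    (hpm : Measurable p) (hqm : Measurable q) (hrm : Measurable r)
    (hpi : Integrable p) (hqi : Integrable q) (hri : Integrable r)
    (hp : ∀ x, 0 ≤ p x) (hq : ∀ x, 0 ≤ q x) (hr : ∀ x, 0 ≤ r x)
    (hsp : 0 < volume (support p)) (hsq : 0 < volume (support q))
    (hsr : 0 < volume (support r))
    (hpq : 0 < ∫ x, max (p x) (q x))
    (hqr : 0 < ∫ x, max (q x) (r x))
    (hpr : 0 < ∫ x, max (p x) (r x)) :
    1 - (∫ x, min (p x) (r x)) / (∫ x, max (p x) (r x)) ≤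
      (1 - (∫ x, min (p x) (q x)) / (∫ x, max (p x) (q x))) +
      (1 - (∫ x, min (q x) (r x)) / (∫ x, max (q x) (r x))) := by
  -- integrability facts
  have hpq_sub : Integrable (fun x => |p x - q x|) := (hpi.sub hqi).abs
  have hqr_sub : Integrable (fun x => |q x - r x|) := (hqi.sub hri).abs
  have hpr_sub : Integrable (fun x => |p x - r x|) := (hpi.sub hri).abs
  have hmaxpq : Integrable (fun x => max (p x) (q x)) := hpi.sup hqi
  have hminpq : Integrable (fun x => min (p x) (q x)) := hpi.inf hqi
  have hmaxqr : Integrable (fun x => max (q x) (r x)) := hqi.sup hri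
  have hminqr : Integrable (fun x => min (q x) (r x)) := hqi.inf hri
  have hmaxpr : Integrable (fun x => max (p x) (r x)) := hpi.sup hri
  have hminpr : Integrable (fun x => min (p x) (r x)) := hpi.inf hri
  set a := ∫ x, p x with ha_def
  set b := ∫ x, q x with hb_def
  set c := ∫ x, r x with hc_def
  set X := ∫ x, |p x - q x| with hX_def
  set Y := ∫ x, |q x - r x| with hY_def
  set Z := ∫ x, |p x - r x| with hZ_def
  -- sum and difference of max/min
  have key : ∀ (f g : ℝ → ℝ), Integrable f → Integrable g →
      Integrable (fun x => max (f x) (g x)) → Integrable (fun x => min (f x) (g x)) →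
      (∫ x, max (f x) (g x)) - (∫ x, min (f x) (g x)) = ∫ x, |f x - g x| := by
    intro f g hf hg hmax hmin
    rw [← integral_sub hmax hmin]
    exact integral_congr_ae (Filter.Eventually.of_forall fun x => max_sub_min_eq_abs' _ _)
  have keys : ∀ (f g : ℝ → ℝ), Integrable f → Integrable g →
      Integrable (fun x => max (f x) (g x)) → Integrable (fun x => min (f x) (g x)) →
      (∫ x, max (f x) (g x)) + (∫ x, min (f x) (g x)) = (∫ x, f x) + (∫ x, g x) := by
    intro f g hf hg hmax hmin
    rw [← integral_add hmax hmin, ← integral_add hf hg]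
    exact integral_congr_ae (Filter.Eventually.of_forall fun x => max_add_min _ _)
  have dpq := key p q hpi hqi hmaxpq hminpq
  have dqr := key q r hqi hri hmaxqr hminqr
  have dpr := key p r hpi hri hmaxpr hminpr
  have spq := keys p q hpi hqi hmaxpq hminpq
  have sqr := keys q r hqi hri hmaxqr hminqr
  have spr := keys p r hpi hri hmaxpr hminpr
  -- nonnegativity
  have ha : 0 ≤ a := integral_nonneg hp
  have hc : 0 ≤ c := integral_nonneg hr
  have hX : 0 ≤ X := integral_nonneg fun x => abs_nonneg _
  have hY : 0 ≤ Y := integral_nonneg fun x => abs_nonneg _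
  have hZ : 0 ≤ Z := integral_nonneg fun x => abs_nonneg _
  -- triangle inequalities
  have hZXY : Z ≤ X + Y := by
    have hmono : Z ≤ ∫ x, (|p x - q x| + |q x - r x|) :=
      integral_mono hpr_sub (hpq_sub.add hqr_sub) fun x => abs_sub_le _ _ _
    rwa [integral_add hpq_sub hqr_sub] at hmono
  have hbaX : b ≤ a + X := by
    have hmono : b ≤ ∫ x, (p x + |p x - q x|) :=
      integral_mono hqi (hpi.add hpq_sub) fun x => by
        have := le_abs_self (q x - p x)
        rw [abs_sub_comm] at this
        linarith
    rwa [integral_add hpi hpq_sub] at hmono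
  have hbcY : b ≤ c + Y := by
    have hmono : b ≤ ∫ x, (r x + |q x - r x|) :=
      integral_mono hqi (hri.add hqr_sub) fun x => by
        have := le_abs_self (q x - r x)
        linarith
    rwa [integral_add hri hqr_sub] at hmono
  -- rewrite the distances
  have hMpq : ∫ x, max (p x) (q x) = (a + b + X) / 2 := by linarith
  have hMqr : ∫ x, max (q x) (r x) = (b + c + Y) / 2 := by linarith
  have hMpr : ∫ x, max (p x) (r x) = (a + c + Z) / 2 := by linarith
  have hmpq : ∫ x, min (p x) (q x) = (a + b - X) / 2 := by linarith
  have hmqr : ∫ x, min (q x) (r x) = (b + c - Y) / 2 := by linarith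
  have hmpr : ∫ x, min (p x) (r x) = (a + c - Z) / 2 := by linarith
  rw [hMpq, hMqr, hMpr, hmpq, hmqr, hmpr]
  have h2 : 0 < a + b + X := by rw [hMpq] at hpq; linarith
  have h3 : 0 < b + c + Y := by rw [hMqr] at hqr; linarith
  have h1 : 0 < a + c + Z := by rw [hMpr] at hpr; linarith
  have hform : ∀ s t : ℝ, 0 < s + t → 1 - (s - t) / 2 / ((s + t) / 2) = 2 * t / (s + t) := by
    intro s t hst
    have h := hst.ne'
    field_simp
    ring
  rw [hform (a + c) Z (by linarith), hform (a + b) X (by linarith),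
    hform (b + c) Y (by linarith)]
  exact steinhaus_key a b c X Y Z ha hc hX hY hZ hZXY hbaX hbcY
    (by linarith) (by linarith) (by linarith)
end

section
/- Penalization bounds: let p, q be probability densities with supp(p) = [a,b], supp(q) = [a,c], b < c, |p(x) − q(x)| < δ for x ∈ [a,b], and ∫_b^c q = ε. Then 1 − (1−ε)/(1 − δ(b−a)) ≤ d_1(p,q) ≤ 1 − (1 − ε − δ(b−a))/(1 + δ(b−a)), assuming δ(b−a) < 1. -/
/-! Outside `[a, b]` we have `p = 0`, so `min p q = 0` and `max p q = q` there, while on `[a, b]`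
the hypothesis `|p - q| < δ` gives `q - δ ≤ min p q ≤ q` and `q ≤ max p q ≤ q + δ`. Integrating,
`1 - ε - δ (b - a) ≤ ∫ min p q ≤ 1 - ε` and `1 ≤ ∫ max p q ≤ 1 + δ (b - a)`, and the two bounds on
the ratio follow. -/

open MeasureTheory Set

section MinMaxBounds

variable {α : Type*} [MeasurableSpace α] {μ : Measure α} {f g : α → ℝ} {s : Set α} {δ : ℝ}

theorem integral_min_le_setIntegral_of_eq_zero_off (hf : Integrable f μ) (hg : Integrable g μ)
    (hs : MeasurableSet s) (hg0 : ∀ x, 0 ≤ g x) (hfs : ∀ x ∉ s, f x = 0) :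
    ∫ x, min (f x) (g x) ∂μ ≤ ∫ x in s, g x ∂μ := by
  rw [← integral_indicator hs]
  refine integral_mono (hf.inf hg) (hg.indicator hs) fun x => ?_
  by_cases hx : x ∈ s
  · simp [hx]
  · simp [hx, hfs x hx, hg0 x]

theorem setIntegral_sub_mul_le_integral_min (hf : Integrable f μ) (hg : Integrable g μ)
    (hs : MeasurableSet s) (hμs : μ s ≠ ⊤) (hg0 : ∀ x, 0 ≤ g x) (hfs : ∀ x ∉ s, f x = 0)
    (hδ : ∀ x ∈ s, |f x - g x| ≤ δ) :
    ∫ x in s, g x ∂μ - δ * μ.real s ≤ ∫ x, min (f x) (g x) ∂μ := by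
  have hδs : IntegrableOn (fun _ => δ) s μ := integrableOn_const hμs
  rw [mul_comm, ← smul_eq_mul, ← setIntegral_const, ← integral_sub hg.integrableOn hδs,
    ← integral_indicator hs]
  refine integral_mono ((hg.integrableOn.sub hδs).integrable_indicator hs) (hf.inf hg)
    fun x => ?_
  by_cases hx : x ∈ s
  · have hfg := (abs_le.1 (hδ x hx)).1
    have hδ0 := (abs_nonneg _).trans (hδ x hx)
    simp only [indicator_of_mem hx]
    exact le_min (by linarith) (by linarith)
  · simp [hx, hfs x hx, hg0 x]

theorem integral_max_le_add_mul (hf : Integrable f μ) (hg : Integrable g μ)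
    (hs : MeasurableSet s) (hμs : μ s ≠ ⊤) (hg0 : ∀ x, 0 ≤ g x) (hfs : ∀ x ∉ s, f x = 0)
    (hδ : ∀ x ∈ s, |f x - g x| ≤ δ) :
    ∫ x, max (f x) (g x) ∂μ ≤ ∫ x, g x ∂μ + δ * μ.real s := by
  have hδs : Integrable (s.indicator fun _ => δ) μ :=
    (integrableOn_const hμs).integrable_indicator hs
  rw [mul_comm, ← smul_eq_mul, ← integral_indicator_const δ hs, ← integral_add hg hδs]
  refine integral_mono (hf.sup hg) (hg.add hδs) fun x => ?_
  by_cases hx : x ∈ s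
  · have hfg := (abs_le.1 (hδ x hx)).2
    have hδ0 := (abs_nonneg _).trans (hδ x hx)
    simp only [indicator_of_mem hx]
    exact max_le (by linarith) (by linarith)
  · simp [hx, hfs x hx, hg0 x]

end MinMaxBounds

theorem setIntegral_Icc_add_setIntegral_Ioc_of_eq_zero_off {μ : Measure ℝ} {g : ℝ → ℝ}
    {a b c : ℝ} (hg : Integrable g μ) (hgc : ∀ x ∉ Icc a c, g x = 0) :
    ∫ x in Icc a b, g x ∂μ + ∫ x in Ioc b c, g x ∂μ = ∫ x, g x ∂μ := by
  have hdisj : Disjoint (Icc a b) (Ioc b c) :=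
    disjoint_left.2 fun x hxab hxbc => hxbc.1.not_ge hxab.2
  rw [← setIntegral_union hdisj measurableSet_Ioc hg.integrableOn hg.integrableOn,
    setIntegral_eq_integral_of_forall_compl_eq_zero]
  refine fun x hx => hgc x fun hxac => hx ?_
  rcases le_or_gt x b with hxb | hbx
  · exact Or.inl ⟨hxac.1, hxb⟩
  · exact Or.inr ⟨hbx, hxac.2⟩

theorem div_le_div_one_sub_of_le {I J U Δ : ℝ} (hI : 0 ≤ I) (hIU : I ≤ U) (hJ : 1 ≤ J)
    (hΔ : 0 ≤ Δ) (hΔ1 : Δ < 1) : I / J ≤ U / (1 - Δ) := by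
  rw [div_le_div_iff₀ (by linarith) (by linarith)]
  nlinarith [mul_nonneg hI hΔ, mul_nonneg (hI.trans hIU) (sub_nonneg.2 hJ)]

theorem div_one_add_le_div_of_le {I J L Δ : ℝ} (hI : 0 ≤ I) (hLI : L ≤ I) (hJ : 0 < J)
    (hJΔ : J ≤ 1 + Δ) : L / (1 + Δ) ≤ I / J := by
  rw [div_le_div_iff₀ (by linarith) hJ]
  nlinarith [mul_nonneg (sub_nonneg.2 hLI) hJ.le, mul_nonneg hI (sub_nonneg.2 hJΔ)]

theorem penalization_bounds_general
    (p q : ℝ → ℝ) (a b c δ ε : ℝ)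
    (hab : a < b)
    (hpi : Integrable p) (hqi : Integrable q)
    (hp : ∀ x, 0 ≤ p x) (hq : ∀ x, 0 ≤ q x)
    (hqint : (∫ x, q x) = 1)
    (hpsupp : ∀ x, x ∉ Set.Icc a b → p x = 0)
    (hqsupp : ∀ x, x ∉ Set.Icc a c → q x = 0)
    (hδ : ∀ x ∈ Set.Icc a b, |p x - q x| < δ)
    (hε : (∫ x in Set.Ioc b c, q x) = ε)
    (hδsmall : δ * (b - a) < 1) :
    1 - (1 - ε) / (1 - δ * (b - a)) ≤
      1 - (∫ x, min (p x) (q x)) / (∫ x, max (p x) (q x)) ∧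
    1 - (∫ x, min (p x) (q x)) / (∫ x, max (p x) (q x)) ≤
      1 - (1 - ε - δ * (b - a)) / (1 + δ * (b - a)) := by
  have hδ' : ∀ x ∈ Icc a b, |p x - q x| ≤ δ := fun x hx => (hδ x hx).le
  have hΔ : 0 ≤ δ * (b - a) :=
    mul_nonneg ((abs_nonneg _).trans (hδ' a (left_mem_Icc.2 hab.le))) (sub_nonneg.2 hab.le)
  have hvol : volume.real (Icc a b) = b - a := Real.volume_real_Icc_of_le hab.le
  have hqab : ∫ x in Icc a b, q x = 1 - ε := by
    linarith [setIntegral_Icc_add_setIntegral_Ioc_of_eq_zero_off (b := b) hqi hqsupp]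
  have hμ : volume (Icc a b) ≠ ⊤ := measure_Icc_lt_top.ne
  have hmin0 : 0 ≤ ∫ x, min (p x) (q x) := integral_nonneg fun x => le_min (hp x) (hq x)
  have hminU : ∫ x, min (p x) (q x) ≤ 1 - ε :=
    hqab ▸ integral_min_le_setIntegral_of_eq_zero_off hpi hqi measurableSet_Icc hq hpsupp
  have hminL : 1 - ε - δ * (b - a) ≤ ∫ x, min (p x) (q x) := by
    simpa [hqab, hvol] using
      setIntegral_sub_mul_le_integral_min hpi hqi measurableSet_Icc hμ hq hpsupp hδ'
  have hmax1 : 1 ≤ ∫ x, max (p x) (q x) :=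
    hqint ▸ integral_mono hqi (hpi.sup hqi) fun x => le_max_right _ _
  have hmaxU : ∫ x, max (p x) (q x) ≤ 1 + δ * (b - a) := by
    simpa [hqint, hvol] using
      integral_max_le_add_mul hpi hqi measurableSet_Icc hμ hq hpsupp hδ'
  constructor
  · linarith [div_le_div_one_sub_of_le hmin0 hminU hmax1 hΔ hδsmall]
  · linarith [div_one_add_le_div_of_le hmin0 hminL (one_pos.trans_le hmax1) hmaxU]

theorem penalization_bounds
    (p q : ℝ → ℝ) (a b c δ ε : ℝ)
    (hab : a < b) (hbc : b < c)
    (hpm : Measurable p) (hqm : Measurable q)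
    (hpi : Integrable p) (hqi : Integrable q)
    (hp : ∀ x, 0 ≤ p x) (hq : ∀ x, 0 ≤ q x)
    (hpint : (∫ x, p x) = 1) (hqint : (∫ x, q x) = 1)
    (hpsupp : ∀ x, x ∉ Set.Icc a b → p x = 0)
    (hqsupp : ∀ x, x ∉ Set.Icc a c → q x = 0)
    (hδ : ∀ x ∈ Set.Icc a b, |p x - q x| < δ)
    (hε : (∫ x in Set.Ioc b c, q x) = ε)
    (hδsmall : δ * (b - a) < 1) :
    1 - (1 - ε) / (1 - δ * (b - a)) ≤
      1 - (∫ x, min (p x) (q x)) / (∫ x, max (p x) (q x)) ∧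
    1 - (∫ x, min (p x) (q x)) / (∫ x, max (p x) (q x)) ≤
      1 - (1 - ε - δ * (b - a)) / (1 + δ * (b - a)) :=
  penalization_bounds_general p q a b c δ ε hab hpi hqi hp hq hqint hpsupp hqsupp hδ hε hδsmall
end
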